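/- Let D ⊂ ℝ^n be a box (product of intervals) with side lengths ρ_1,...,ρ_n satisfying ρ_1·...·ρ_n < 1/(n!·(k+1)^{n+1}), and let R_k = {p/q : p ∈ ℤ^n, 1 ≤ q ≤ k}. Then there exists an affine hyperplane L ⊆ ℝ^n such that R_k ∩ D ⊆ L. -/

import Mathlib

/-!
Lift each point `x` of `R_k ∩ D` to `(1, x) ∈ ℝ^{n+1}`. If the lifts do not span `ℝ^{n+1}`, a
nonzero linear form vanishes on all of them, and that is an affine hyperplane through `R_k ∩ D`.
Otherwise some `n + 1` lifts `(1, p_j / q_j)` form a nonsingular matrix `M`. Multiplying the rows by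
`q_j ≤ k` gives a nonzero integer determinant, so `1 ≤ k^{n+1} |det M|`; subtracting the first row
from the others shows `|det M| ≤ n! ρ_1 ⋯ ρ_n`. Together these contradict the volume bound.
-/

open Set Finset

namespace Matrix

theorem abs_det_le_factorial_mul_prod {ι R : Type*} [Fintype ι] [DecidableEq ι]
    [CommRing R] [LinearOrder R] [IsStrictOrderedRing R] (A : Matrix ι ι R) {c : ι → R}
    (hA : ∀ i j, |A i j| ≤ c j) : |A.det| ≤ (Fintype.card ι).factorial * ∏ j, c j :=
  calc |A.det| = |∑ σ : Equiv.Perm ι, (Equiv.Perm.sign σ : R) * ∏ j, A (σ j) j| := by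
        rw [det_apply']
    _ ≤ ∑ σ : Equiv.Perm ι, |(Equiv.Perm.sign σ : R) * ∏ j, A (σ j) j| :=
        Finset.abs_sum_le_sum_abs _ _
    _ = ∑ σ : Equiv.Perm ι, ∏ j, |A (σ j) j| := by
        simp only [abs_mul, Finset.abs_prod, abs_unit_intCast, one_mul]
    _ ≤ ∑ _σ : Equiv.Perm ι, ∏ j, c j := by gcongr with σ _ j; exact hA _ _
    _ = (Fintype.card ι).factorial * ∏ j, c j := by
        rw [Finset.sum_const, Finset.card_univ, Fintype.card_perm, nsmul_eq_mul]

end Matrix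

theorem LinearMap.apply_eq_sum_mul_apply_single {K κ : Type*} [CommSemiring K] [Fintype κ]
    [DecidableEq κ] (φ : (κ → K) →ₗ[K] K) (v : κ → K) :
    φ v = ∑ j, v j * φ (Pi.single j 1) := by
  conv_lhs => rw [← Finset.univ_sum_single v]
  rw [map_sum]
  refine Finset.sum_congr rfl fun j _ => ?_
  rw [← smul_eq_mul, ← map_smul, ← Pi.single_smul', smul_eq_mul, mul_one]

open Submodule in
theorem exists_det_ne_zero_of_span_image_eq_top {K α κ : Type*} [Field K] [Fintype κ]
    [DecidableEq κ] {f : α → κ → K} {S : Set α} (h : span K (f '' S) = ⊤) :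
    ∃ x : κ → α, (∀ j, x j ∈ S) ∧ (Matrix.of fun j => f (x j)).det ≠ 0 := by
  let B := Module.Basis.ofSpan h.ge
  let e := B.indexEquiv (Pi.basisFun K κ)
  have hB : ∀ j, B (e.symm j) ∈ f '' S := fun j => by
    rw [Module.Basis.coe_ofSpan]
    exact LinearIndepOn.extend_subset _ _ (e.symm j).2
  choose x hxS hx using hB
  refine ⟨x, hxS, ?_⟩
  have hli : LinearIndependent K fun j => f (x j) := by
    simp_rw [hx]
    exact B.linearIndependent.comp _ e.symm.injective
  exact ((Matrix.isUnit_iff_isUnit_det _).mp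
    (Matrix.linearIndependent_rows_iff_isUnit.mp hli)).ne_zero

section Homogenize

variable {ι R : Type*}

def homogenize [One R] (x : ι → R) : Fin 1 ⊕ ι → R := Sum.elim (fun _ => 1) x

open Submodule in
theorem exists_hyperplane_of_span_homogenize_ne_top [Field R] [Fintype ι] [DecidableEq ι]
    [Nonempty ι] {S : Set (ι → R)} (h : span R (homogenize '' S) ≠ ⊤) :
    ∃ (u : ι → R) (c : R), u ≠ 0 ∧ ∀ x ∈ S, ∑ i, u i * x i = c := by
  rcases S.eq_empty_or_nonempty with rfl | ⟨x₀, hx₀⟩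
  · obtain ⟨i⟩ := ‹Nonempty ι›
    exact ⟨Pi.single i 1, 0, by simp, by simp⟩
  obtain ⟨φ, hφ, hker⟩ := (span R (homogenize '' S)).exists_le_ker_of_lt_top h.lt_top
  have hS : ∀ x ∈ S, φ (Pi.single (.inl 0) 1) + ∑ i, φ (Pi.single (.inr i) 1) * x i = 0 :=
    fun x hx => by
      have : φ (homogenize x) = 0 := hker (subset_span (mem_image_of_mem _ hx))
      rw [φ.apply_eq_sum_mul_apply_single] at this
      simpa only [Fintype.sum_sum_type, Fin.sum_univ_one,
        homogenize, Sum.elim_inl, Sum.elim_inr, one_mul, mul_comm] using this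
  refine ⟨fun i => φ (Pi.single (.inr i) 1), -φ (Pi.single (.inl 0) 1), fun hu => hφ ?_,
    fun x hx => ?_⟩
  · have hu' : ∀ i, φ (Pi.single (.inr i) 1) = 0 := fun i => congrFun hu i
    have h₀ : φ (Pi.single (.inl 0) 1) = 0 := by simpa [hu'] using hS x₀ hx₀
    refine LinearMap.ext fun v => ?_
    simp [φ.apply_eq_sum_mul_apply_single v, Fintype.sum_sum_type, hu', h₀]
  · linear_combination hS x hx

theorem det_of_homogenize [CommRing R] [Fintype ι] [DecidableEq ι] (x : Fin 1 ⊕ ι → ι → R) :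
    (Matrix.of fun j => homogenize (x j)).det =
      (Matrix.of fun j i => x (.inr j) i - x (.inl 0) i).det := by
  have hblocks : (Matrix.of fun j => homogenize (x j)) = Matrix.fromBlocks 1
      (Matrix.of fun _ i => x (.inl 0) i) (Matrix.of fun _ _ => 1)
      (Matrix.of fun j i => x (.inr j) i) := by
    ext (j | j) (i | i) <;> simp [homogenize, Fin.fin_one_eq_zero]
  rw [hblocks, Matrix.det_fromBlocks_one₁₁]
  congr 1
  ext j i
  simp [Matrix.mul_apply]

theorem abs_det_of_homogenize_le [CommRing R] [LinearOrder R] [IsStrictOrderedRing R]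
    [Fintype ι] [DecidableEq ι] {a b : ι → R} {x : Fin 1 ⊕ ι → ι → R}
    (hx : ∀ j, x j ∈ univ.pi fun i => Icc (a i) (b i)) :
    |(Matrix.of fun j => homogenize (x j)).det| ≤
      (Fintype.card ι).factorial * ∏ i, (b i - a i) := by
  rw [det_of_homogenize]
  refine Matrix.abs_det_le_factorial_mul_prod _ fun j i => ?_
  obtain ⟨hj₁, hj₂⟩ := hx (.inr j) i (mem_univ i)
  obtain ⟨h₀₁, h₀₂⟩ := hx (.inl 0) i (mem_univ i)
  rw [Matrix.of_apply, abs_sub_le_iff]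
  constructor <;> linarith

def ratPoints (ι : Type*) (k : ℕ) : Set (ι → ℝ) :=
  {x | ∃ (p : ι → ℤ) (q : ℕ), 1 ≤ q ∧ q ≤ k ∧ ∀ i, x i = p i / q}

theorem homogenize_mem_ratPoints {k : ℕ} {x : ι → ℝ} (hx : x ∈ ratPoints ι k) :
    homogenize x ∈ ratPoints (Fin 1 ⊕ ι) k := by
  obtain ⟨p, q, hq₁, hqk, hxp⟩ := hx
  have hq : (q : ℝ) ≠ 0 := by positivity
  refine ⟨Sum.elim (fun _ => q) p, q, hq₁, hqk, ?_⟩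
  rintro (_ | i)
  · simp [homogenize, hq]
  · simp [homogenize, hxp]

end Homogenize

theorem one_le_pow_card_mul_abs_det {ι : Type*} [Fintype ι] [DecidableEq ι] {k : ℕ}
    {M : Matrix ι ι ℝ} (hM : ∀ j, M j ∈ ratPoints ι k) (hdet : M.det ≠ 0) :
    1 ≤ (k : ℝ) ^ Fintype.card ι * |M.det| := by
  choose p q hq₁ hqk hMpq using hM
  have hq : ∀ j, (0 : ℝ) < q j := fun j => by have := hq₁ j; positivity
  set Z : Matrix ι ι ℤ := Matrix.of p
  have hclear : (∏ j, (q j : ℝ)) * M.det = (Z.det : ℝ) := by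
    have : Matrix.diagonal (fun j => (q j : ℝ)) * M = Z.map (Int.castRingHom ℝ) := by
      ext j i
      simp [Matrix.diagonal_mul, hMpq, Z, mul_div_cancel₀ _ (hq j).ne']
    rw [← Matrix.det_diagonal, ← Matrix.det_mul, this]
    exact ((Int.castRingHom ℝ).map_det Z).symm
  have hQ : 0 < ∏ j, (q j : ℝ) := Finset.prod_pos fun j _ => hq j
  have hZ : Z.det ≠ 0 := by
    rintro h
    rw [h, Int.cast_zero, mul_eq_zero] at hclear
    exact hclear.elim hQ.ne' hdet
  have hQk : ∏ j, (q j : ℝ) ≤ (k : ℝ) ^ Fintype.card ι :=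
    calc ∏ j, (q j : ℝ) ≤ ∏ _j : ι, (k : ℝ) := by gcongr with j; exact_mod_cast hqk j
      _ = (k : ℝ) ^ Fintype.card ι := by rw [Finset.prod_const, Finset.card_univ]
  calc (1 : ℝ) ≤ |(Z.det : ℝ)| := by exact_mod_cast Int.one_le_abs hZ
    _ = (∏ j, (q j : ℝ)) * |M.det| := by rw [← hclear, abs_mul, abs_of_pos hQ]
    _ ≤ (k : ℝ) ^ Fintype.card ι * |M.det| := by gcongr

theorem simplex_lemma_general (n k : ℕ) (hn : 0 < n) (a b : Fin n → ℝ)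
    (hvol : ∏ i, (b i - a i) < 1 / ((n.factorial : ℝ) * ((k : ℝ) + 1) ^ (n + 1))) :
    ∃ (u : Fin n → ℝ) (c : ℝ), u ≠ 0 ∧
      ∀ x ∈ {x : Fin n → ℝ | ∃ (p : Fin n → ℤ) (q : ℕ),
              1 ≤ q ∧ q ≤ k ∧ ∀ i, x i = (p i : ℝ) / (q : ℝ)} ∩
            univ.pi fun i => Icc (a i) (b i),
        ∑ i, u i * x i = c := by
  have : Nonempty (Fin n) := Fin.pos_iff_nonempty.mp hn
  refine exists_hyperplane_of_span_homogenize_ne_top fun hspan => ?_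
  obtain ⟨x, hxS, hdet⟩ := exists_det_ne_zero_of_span_image_eq_top hspan
  have hupper := abs_det_of_homogenize_le fun j => (hxS j).2
  have hlower := one_le_pow_card_mul_abs_det (fun j => homogenize_mem_ratPoints (hxS j).1) hdet
  rw [Fintype.card_sum, Fintype.card_fin, Fintype.card_fin, add_comm] at hlower
  rw [Fintype.card_fin] at hupper
  rw [lt_div_iff₀ (by positivity)] at hvol
  have hkpow : (k : ℝ) ^ (n + 1) ≤ ((k : ℝ) + 1) ^ (n + 1) := by gcongr; linarith
  refine lt_irrefl (1 : ℝ) ?_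
  calc (1 : ℝ) ≤ (k : ℝ) ^ (n + 1) * |_| := hlower
    _ ≤ ((k : ℝ) + 1) ^ (n + 1) * (n.factorial * ∏ i, (b i - a i)) :=
        mul_le_mul hkpow hupper (abs_nonneg _) (by positivity)
    _ = (∏ i, (b i - a i)) * (n.factorial * ((k : ℝ) + 1) ^ (n + 1)) := by ring
    _ < 1 := hvol

/-- Simplex Lemma (Davenport–Schmidt): if `D ⊂ ℝⁿ` is a box with side lengths
`ρ₁,…,ρₙ` satisfying `ρ₁⋯ρₙ < 1/(n!·(k+1)^{n+1})`, then the rational points with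
denominator at most `k` lying in `D` are contained in an affine hyperplane. -/
theorem simplex_lemma (n k : ℕ) (hn : 0 < n) (hk : 0 < k) (a b : Fin n → ℝ)
    (hab : ∀ i, a i ≤ b i)
    (hvol : ∏ i, (b i - a i) < 1 / ((n.factorial : ℝ) * ((k : ℝ) + 1) ^ (n + 1))) :
    ∃ (u : Fin n → ℝ) (c : ℝ), u ≠ 0 ∧
      ∀ x ∈ {x : Fin n → ℝ | ∃ (p : Fin n → ℤ) (q : ℕ),
              1 ≤ q ∧ q ≤ k ∧ ∀ i, x i = (p i : ℝ) / (q : ℝ)} ∩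
            univ.pi fun i => Icc (a i) (b i),
        ∑ i, u i * x i = c :=
  simplex_lemma_general n k hn a b hvol
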